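/- arXiv:2110.15466 — 2 statements merged into one kernel-verified Lean document; each statement's English description precedes it below -/
import Mathlib

section
/- Let H be a Hermitian matrix on ℂ^d with ‖H‖ ≤ b for some b ≥ 1, and let δ ∈ (0,1). Let k be an integer with k ≥ (5b + log(1/δ))/log(2), i.e., large enough that max_{x∈[-b,b]} |e^x − T_k(x)| ≤ δe^{-b} where T_k(x) = ∑_{p=0}^k x^p/p!. Then the matrix A = T_k(H) = ∑_{p=0}^k H^p/p! is positive semidefinite and satisfies (1−δ) Tr(e^H) ≤ Tr(A) ≤ (1+δ) Tr(e^H). -/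
open scoped ComplexOrder

noncomputable section

/-- The operator (spectral) norm of a matrix, i.e. the norm of the induced operator
on Euclidean space. -/
noncomputable def opNorm {m : Type*} [Fintype m] [DecidableEq m] (M : Matrix m m ℂ) : ℝ :=
  ‖Matrix.toEuclideanCLM (𝕜 := ℂ) M‖

/-!
Both `T_k(H)` and `e^H` are obtained from `H` by the continuous functional calculus, so their
traces are `∑ᵢ T_k(λᵢ)` and `∑ᵢ e^{λᵢ}` over the eigenvalues `λᵢ ∈ [-b, b]` of `H`, and positivity
of `T_k(H)` means `T_k ≥ 0` on the spectrum. Everything thus reduces to the scalar bound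
`|e^x - T_k(x)| ≤ δ e^{-b} ≤ δ e^x` on `[-b, b]`. The Taylor remainder is at most
`2 b^{k+1} / (k+1)!`; since `n! ≥ (n/e)^n` and `k + 1 ≥ 2eb`, this is at most `2^{-k}`, and the
choice of `k` makes `2^{-k} ≤ δ e^{-5b}`.
-/

open Finset Real
open scoped Matrix.Norms.L2Operator MatrixOrder

def expTaylor (k : ℕ) (x : ℝ) : ℝ := ∑ p ∈ range (k + 1), x ^ p / p.factorial

lemma Real.abs_exp_sub_sum_range_le {x : ℝ} {n : ℕ} (hx : |x| / n.succ ≤ 1 / 2) :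
    |exp x - ∑ m ∈ range n, x ^ m / m.factorial| ≤ |x| ^ n / n.factorial * 2 := by
  have hxc : ‖(x : ℂ)‖ / n.succ ≤ 1 / 2 := mod_cast hx
  convert Complex.exp_bound' hxc <;> norm_cast

lemma pow_le_factorial_of_exp_one_mul_le {x : ℝ} (hx : 0 ≤ x) {n : ℕ} (h : exp 1 * x ≤ n) :
    x ^ n ≤ n.factorial := by
  have hn : (n : ℝ) ^ n ≤ exp 1 ^ n * n.factorial := by
    rw [← Real.exp_nat_mul, mul_one, ← div_le_iff₀ (by positivity)]
    exact pow_div_factorial_le_exp _ (Nat.cast_nonneg n) n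
  refine le_of_mul_le_mul_right (a := exp 1 ^ n) ?_ (by positivity)
  calc x ^ n * exp 1 ^ n = (exp 1 * x) ^ n := by ring
    _ ≤ (n : ℝ) ^ n := by gcongr
    _ ≤ n.factorial * exp 1 ^ n := by linarith

lemma abs_exp_sub_expTaylor_le_half_pow {x : ℝ} {k : ℕ} (hk : exp 1 * (2 * |x|) ≤ k + 1) :
    |exp x - expTaylor k x| ≤ (1 / 2) ^ k := by
  have hfact : (2 * |x|) ^ (k + 1) ≤ (k + 1).factorial :=
    pow_le_factorial_of_exp_one_mul_le (by positivity) (by exact_mod_cast hk)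
  have hsmall : |x| / (k + 1).succ ≤ 1 / 2 := by
    rw [div_le_iff₀ (by positivity)]
    push_cast
    nlinarith [add_one_le_exp (1 : ℝ), abs_nonneg x]
  calc |exp x - expTaylor k x| ≤ |x| ^ (k + 1) / (k + 1).factorial * 2 :=
        Real.abs_exp_sub_sum_range_le hsmall
    _ ≤ (1 / 2) ^ (k + 1) * 2 := by
        gcongr
        rw [div_le_iff₀ (by positivity)]
        calc |x| ^ (k + 1) = (1 / 2) ^ (k + 1) * (2 * |x|) ^ (k + 1) := by
              rw [← mul_pow]; ring_nf
          _ ≤ (1 / 2) ^ (k + 1) * (k + 1).factorial := by gcongr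
    _ = (1 / 2) ^ k := by ring

lemma abs_exp_sub_expTaylor_le {b δ : ℝ} (hδ₀ : 0 < δ) (hδ₁ : δ ≤ 1) {k : ℕ}
    (hk : (5 * b + log (1 / δ)) / log 2 ≤ k) {x : ℝ} (hx : |x| ≤ b) :
    |exp x - expTaylor k x| ≤ δ * exp (-b) := by
  have hb : 0 ≤ b := (abs_nonneg x).trans hx
  have hkb : 5 * b + log (1 / δ) ≤ k * log 2 := (div_le_iff₀ (log_pos one_lt_two)).mp hk
  have hδlog : 0 ≤ log (1 / δ) := log_nonneg (one_le_one_div hδ₀ hδ₁)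
  -- `log 2 < 0.7` and `2e < 5.5`, so `k ≥ 5b / log 2` exceeds `2eb`
  have hk2 : exp 1 * (2 * b) ≤ k + 1 := by
    nlinarith [exp_one_lt_d9,
      mul_le_mul_of_nonneg_left log_two_lt_d9.le (Nat.cast_nonneg (α := ℝ) k)]
  calc |exp x - expTaylor k x| ≤ (1 / 2) ^ k :=
        abs_exp_sub_expTaylor_le_half_pow (hk2.trans' (by gcongr))
    _ = exp (-(k * log 2)) := by rw [exp_neg, exp_nat_mul, exp_log two_pos, one_div, inv_pow]
    _ ≤ exp (-(log (1 / δ) + b)) := by gcongr; linarith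
    _ = δ * exp (-b) := by rw [neg_add, exp_add, one_div, log_inv, neg_neg, exp_log hδ₀]

lemma abs_expTaylor_sub_exp_le_mul_exp {b δ : ℝ} (hδ₀ : 0 < δ) (hδ₁ : δ ≤ 1) {k : ℕ}
    (hk : (5 * b + log (1 / δ)) / log 2 ≤ k) {x : ℝ} (hx : |x| ≤ b) :
    |expTaylor k x - exp x| ≤ δ * exp x := by
  rw [abs_sub_comm]
  refine (abs_exp_sub_expTaylor_le hδ₀ hδ₁ hk hx).trans ?_
  gcongr
  linarith [neg_abs_le x]

lemma cfc_expTaylor {A : Type*} [Ring A] [StarRing A] [TopologicalSpace A] [Algebra ℝ A]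
    [ContinuousFunctionalCalculus ℝ A IsSelfAdjoint] (k : ℕ) (a : A)
    (ha : IsSelfAdjoint a := by cfc_tac) :
    cfc (expTaylor k) a = ∑ p ∈ range (k + 1), (p.factorial : ℝ)⁻¹ • a ^ p := by
  have hsum : expTaylor k = ∑ p ∈ range (k + 1), fun x => (p.factorial : ℝ)⁻¹ * x ^ p := by
    ext x
    simp [expTaylor, div_eq_inv_mul]
  rw [hsum, cfc_sum _ a _]
  exact sum_congr rfl fun p _ => by rw [cfc_const_mul _ _ a, cfc_pow_id a p]

namespace Matrix

variable {n 𝕜 : Type*} [Fintype n] [DecidableEq n] [RCLike 𝕜] {A : Matrix n n 𝕜}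

lemma abs_le_l2_opNorm_of_mem_spectrum {x : ℝ} (hx : x ∈ spectrum ℝ A) : |x| ≤ ‖A‖ := by
  rcases isEmpty_or_nonempty n with hn | hn
  · simp [spectrum.of_subsingleton] at hx
  · simpa using spectrum.norm_le_norm_of_mem ((spectrum.algebraMap_mem_iff 𝕜).mpr hx)

lemma IsHermitian.trace_cfc (hA : A.IsHermitian) (f : ℝ → ℝ) :
    (cfc f A).trace = ∑ i, (f (hA.eigenvalues i) : 𝕜) := by
  rw [hA.cfc_eq, IsHermitian.cfc, Unitary.conjStarAlgAut_apply, trace_mul_cycle,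
    Unitary.coe_star_mul_self, one_mul, trace_diagonal]
  rfl

end Matrix

theorem matrix_exp_taylor_truncation_general {d : ℕ} (H : Matrix (Fin d) (Fin d) ℂ)
    (hH : H.IsHermitian) (b δ : ℝ) (hnorm : opNorm H ≤ b)
    (hδ : δ ∈ Set.Ioo (0 : ℝ) 1) (k : ℕ)
    (hk : (5 * b + Real.log (1 / δ)) / Real.log 2 ≤ (k : ℝ)) :
    (∑ p ∈ Finset.range (k + 1), ((p.factorial : ℂ))⁻¹ • H ^ p).PosSemidef ∧
    (1 - δ) * ((NormedSpace.exp H).trace).re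
      ≤ ((∑ p ∈ Finset.range (k + 1), ((p.factorial : ℂ))⁻¹ • H ^ p).trace).re ∧
    ((∑ p ∈ Finset.range (k + 1), ((p.factorial : ℂ))⁻¹ • H ^ p).trace).re
      ≤ (1 + δ) * ((NormedSpace.exp H).trace).re := by
  obtain ⟨hδ₀, hδ₁⟩ := hδ
  have hT : ∑ p ∈ range (k + 1), ((p.factorial : ℂ))⁻¹ • H ^ p = cfc (expTaylor k) H := by
    rw [cfc_expTaylor k H hH.isSelfAdjoint]
    simp [← Complex.coe_smul]
  have hE : NormedSpace.exp H = cfc exp H :=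
    (CFC.real_exp_eq_normedSpace_exp hH.isSelfAdjoint).symm
  have hHb : ‖H‖ ≤ b := (Matrix.l2_opNorm_toEuclideanCLM H).symm.trans_le hnorm
  have hclose : ∀ x ∈ spectrum ℝ H, |expTaylor k x - exp x| ≤ δ * exp x := fun x hx =>
    abs_expTaylor_sub_exp_le_mul_exp hδ₀ hδ₁.le hk
      ((Matrix.abs_le_l2_opNorm_of_mem_spectrum hx).trans hHb)
  have heig : ∀ i, |expTaylor k (hH.eigenvalues i) - exp (hH.eigenvalues i)|
      ≤ δ * exp (hH.eigenvalues i) := fun i => hclose _ (hH.eigenvalues_mem_spectrum_real i)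
  rw [hT, hE, hH.trace_cfc, hH.trace_cfc]
  simp only [Complex.coe_algebraMap, Complex.re_sum, Complex.ofReal_re, mul_sum]
  refine ⟨Matrix.nonneg_iff_posSemidef.mp (cfc_nonneg fun x hx => ?_), sum_le_sum fun i _ => ?_,
    sum_le_sum fun i _ => ?_⟩
  · nlinarith [(abs_le.mp (hclose x hx)).1, exp_pos x]
  · linarith [(abs_le.mp (heig i)).1]
  · linarith [(abs_le.mp (heig i)).2]

/-- **Taylor truncation of the matrix exponential.**
Let `H` be Hermitian on `ℂ^d` with `‖H‖ ≤ b` for some `b ≥ 1` and let `δ ∈ (0,1)`.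
If `k ≥ (5b + log(1/δ))/log 2` (which makes `max_{x∈[-b,b]}|e^x − T_k(x)| ≤ δe^{-b}`),
then `A = T_k(H) = ∑_{p=0}^k H^p/p!` is positive semidefinite and
`(1−δ) Tr(e^H) ≤ Tr(A) ≤ (1+δ) Tr(e^H)`. -/
theorem matrix_exp_taylor_truncation {d : ℕ} (H : Matrix (Fin d) (Fin d) ℂ)
    (hH : H.IsHermitian) (b δ : ℝ) (hb : 1 ≤ b) (hnorm : opNorm H ≤ b)
    (hδ : δ ∈ Set.Ioo (0 : ℝ) 1) (k : ℕ)
    (hk : (5 * b + Real.log (1 / δ)) / Real.log 2 ≤ (k : ℝ)) :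
    (∑ p ∈ Finset.range (k + 1), ((p.factorial : ℂ))⁻¹ • H ^ p).PosSemidef ∧
    (1 - δ) * ((NormedSpace.exp H).trace).re
      ≤ ((∑ p ∈ Finset.range (k + 1), ((p.factorial : ℂ))⁻¹ • H ^ p).trace).re ∧
    ((∑ p ∈ Finset.range (k + 1), ((p.factorial : ℂ))⁻¹ • H ^ p).trace).re
      ≤ (1 + δ) * ((NormedSpace.exp H).trace).re :=
  matrix_exp_taylor_truncation_general H hH b δ hnorm hδ k hk

end
end

section
/- Let H = ∑_{l=1}^L γ_l Π_l be an operator on a finite-dimensional Hilbert space 𝓗, where each Π_l is an orthogonal projector, γ_l ≥ 0, and ∑_l γ_l = 1. Define the operator H' on 𝓗 ⊗ ℂ^{L+1} by H' = ∑_{l=1}^L √γ_l · Π_l ⊗ ( |l⟩⟨0| + |0⟩⟨l| ), where {|0⟩,|1⟩,…,|L⟩} is an orthonormal basis of ℂ^{L+1}. Then for every natural number k, (I ⊗ ⟨0|) H'^{2k} (I ⊗ |0⟩) = H^k, and consequently for every β ≥ 0, (I ⊗ ⟨0|) e^{-β H'²/2} (I ⊗ |0⟩) = e^{-βH/2}.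 -/
open scoped Kronecker

noncomputable section

/-- Compression `(I ⊗ ⟨0|) M (I ⊗ |0⟩)` of an operator on `𝓗 ⊗ ℂ^{L+1}` to the
subspace `𝓗 ⊗ |0⟩`, viewed as an operator on `𝓗`. -/
noncomputable def ancillaCompress {ι : Type*} {L : ℕ}
    (M : Matrix (ι × Fin (L + 1)) (ι × Fin (L + 1)) ℂ) : Matrix ι ι ℂ :=
  Matrix.of fun a b => M (a, 0) (b, 0)

/-! Since `(|l⟩⟨0| + |0⟩⟨l|)(|m⟩⟨0| + |0⟩⟨m|)|0⟩ = δ_{lm}|0⟩`, the operator `H'²` maps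
`𝓗 ⊗ |0⟩` into itself and acts there as `∑ γ_l Π_l² = H`. On operators leaving `𝓗 ⊗ |0⟩`
invariant the compression is multiplicative, so it commutes with powers and, termwise, with the
exponential series. -/

section Compression

variable {ι : Type*} {L : ℕ}

/-- `M` maps `𝓗 ⊗ |0⟩` into itself. -/
def PreservesAncillaZero (M : Matrix (ι × Fin (L + 1)) (ι × Fin (L + 1)) ℂ) : Prop :=
  ∀ a (j : Fin (L + 1)) b, j ≠ 0 → M (a, j) (b, 0) = 0

theorem PreservesAncillaZero.smul {M : Matrix (ι × Fin (L + 1)) (ι × Fin (L + 1)) ℂ}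
    (hM : PreservesAncillaZero M) (c : ℂ) : PreservesAncillaZero (c • M) :=
  fun a j b hj => by rw [Matrix.smul_apply, hM a j b hj, smul_zero]

theorem ancillaCompress_smul (c : ℂ) (M : Matrix (ι × Fin (L + 1)) (ι × Fin (L + 1)) ℂ) :
    ancillaCompress (c • M) = c • ancillaCompress M :=
  rfl

theorem ancillaCompress_one [DecidableEq ι] :
    ancillaCompress (1 : Matrix (ι × Fin (L + 1)) (ι × Fin (L + 1)) ℂ) = 1 := by
  ext a b
  simp [ancillaCompress, Matrix.one_apply]

variable [Fintype ι]

theorem ancillaCompress_mul {M N : Matrix (ι × Fin (L + 1)) (ι × Fin (L + 1)) ℂ}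
    (hN : PreservesAncillaZero N) :
    ancillaCompress (M * N) = ancillaCompress M * ancillaCompress N := by
  ext a b
  simp only [ancillaCompress, Matrix.of_apply, Matrix.mul_apply, Fintype.sum_prod_type]
  refine Finset.sum_congr rfl fun c _ => Fintype.sum_eq_single 0 fun j hj => ?_
  rw [hN c j b hj, mul_zero]

variable [DecidableEq ι]

theorem ancillaCompress_pow {M : Matrix (ι × Fin (L + 1)) (ι × Fin (L + 1)) ℂ}
    (hM : PreservesAncillaZero M) (k : ℕ) :
    ancillaCompress (M ^ k) = ancillaCompress M ^ k := by
  induction k with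
  | zero => exact ancillaCompress_one
  | succ k ih => rw [pow_succ, pow_succ, ancillaCompress_mul hM, ih]

theorem ancillaCompress_exp {M : Matrix (ι × Fin (L + 1)) (ι × Fin (L + 1)) ℂ}
    (hM : PreservesAncillaZero M) :
    ancillaCompress (NormedSpace.exp M) = NormedSpace.exp (ancillaCompress M) := by
  let _ : NormedRing (Matrix (ι × Fin (L + 1)) (ι × Fin (L + 1)) ℂ) :=
    Matrix.linftyOpNormedRing
  let _ : NormedAlgebra ℂ (Matrix (ι × Fin (L + 1)) (ι × Fin (L + 1)) ℂ) :=
    Matrix.linftyOpNormedAlgebra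
  -- `ancillaCompress M` is the diagonal block `Matrix.blockDiag M 0`
  have hsum := (NormedSpace.expSeries_summable' (𝕂 := ℂ) M).hasSum.matrix_blockDiag
  rw [NormedSpace.exp_eq_tsum ℂ, NormedSpace.exp_eq_tsum ℂ]
  calc ancillaCompress (∑' n : ℕ, (n.factorial⁻¹ : ℂ) • M ^ n)
      = ∑' n : ℕ, ancillaCompress ((n.factorial⁻¹ : ℂ) • M ^ n) :=
        (Pi.hasSum.mp hsum 0).tsum_eq.symm
    _ = _ := by simp only [ancillaCompress_smul, ancillaCompress_pow hM]

end Compression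

def ancillaHop {L : ℕ} (l : Fin L) : Matrix (Fin (L + 1)) (Fin (L + 1)) ℂ :=
  Matrix.single l.succ 0 1 + Matrix.single 0 l.succ 1

theorem ancillaHop_mul_ancillaHop_apply_zero {L : ℕ} (l m : Fin L) (j : Fin (L + 1)) :
    (ancillaHop l * ancillaHop m) j 0 = if l = m ∧ j = 0 then 1 else 0 := by
  by_cases h : l = m
  · subst h
    simp [ancillaHop, Matrix.mul_apply, Matrix.single_apply, Fin.succ_ne_zero, eq_comm]
  · simp [ancillaHop, Matrix.mul_apply, Matrix.single_apply, Fin.succ_ne_zero, h, eq_comm]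

theorem sum_kronecker_ancillaHop_mul_self_apply_zero {ι : Type*} [Fintype ι] {L : ℕ}
    (c : Fin L → ℂ) (A : Fin L → Matrix ι ι ℂ) (a : ι) (j : Fin (L + 1)) (b : ι) :
    ((∑ l, c l • (A l ⊗ₖ ancillaHop l)) * ∑ l, c l • (A l ⊗ₖ ancillaHop l)) (a, j) (b, 0)
      = if j = 0 then (∑ l, (c l * c l) • (A l * A l)) a b else 0 := by
  simp only [Finset.sum_mul_sum, Matrix.smul_mul, Matrix.mul_smul, smul_smul,
    ← Matrix.mul_kronecker_mul, Matrix.sum_apply, Matrix.smul_apply,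
    Matrix.kroneckerMap_apply, ancillaHop_mul_ancillaHop_apply_zero, smul_eq_mul]
  split_ifs with hj <;> simp [hj]

theorem effective_square_root_general {ι : Type*} [Fintype ι] [DecidableEq ι] (L : ℕ)
    (γ : Fin L → ℝ) (Pr : Fin L → Matrix ι ι ℂ)
    (hγ0 : ∀ l, 0 ≤ γ l) (hproj : ∀ l, Pr l * Pr l = Pr l) :
    ∀ (H : Matrix ι ι ℂ) (H' : Matrix (ι × Fin (L + 1)) (ι × Fin (L + 1)) ℂ),
      H = ∑ l, (γ l : ℂ) • Pr l →
      H' = ∑ l, ((Real.sqrt (γ l) : ℝ) : ℂ) •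
        (Pr l ⊗ₖ (Matrix.single l.succ 0 (1 : ℂ)
          + Matrix.single 0 l.succ (1 : ℂ))) →
      (∀ k : ℕ, ancillaCompress (H' ^ (2 * k)) = H ^ k) ∧
      (∀ β : ℝ, 0 ≤ β →
        ancillaCompress (NormedSpace.exp (-(((β / 2 : ℝ)) : ℂ) • (H' * H')))
          = NormedSpace.exp (-(((β / 2 : ℝ)) : ℂ) • H)) := by
  intro H H' hH hH'
  have hH_sq : H = ∑ l, ((Real.sqrt (γ l) : ℂ) * (Real.sqrt (γ l) : ℂ)) • (Pr l * Pr l) := by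
    simp only [hH, hproj, ← Complex.ofReal_mul, Real.mul_self_sqrt (hγ0 _)]
  have hsq : ∀ a j b, (H' * H') (a, j) (b, 0) = if j = 0 then H a b else 0 := by
    rw [hH_sq, hH']
    exact sum_kronecker_ancillaHop_mul_self_apply_zero _ _
  have hpres : PreservesAncillaZero (H' * H') := fun a j b hj => by rw [hsq, if_neg hj]
  have hcomp : ancillaCompress (H' * H') = H := Matrix.ext fun a b =>
    (hsq a 0 b).trans (if_pos rfl)
  refine ⟨fun k => ?_, fun β _ => ?_⟩
  · rw [pow_mul, sq, ancillaCompress_pow hpres, hcomp]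
  · rw [ancillaCompress_exp (hpres.smul _), ancillaCompress_smul, hcomp]

/-- **An effective square root of a sum of projectors.**
Let `H = ∑_l γ_l Π_l` with each `Π_l` an orthogonal projector, `γ_l ≥ 0`, `∑_l γ_l = 1`,
and define `H' = ∑_l √γ_l · Π_l ⊗ (|l⟩⟨0| + |0⟩⟨l|)` on `𝓗 ⊗ ℂ^{L+1}`.  Then
`(I ⊗ ⟨0|) H'^{2k} (I ⊗ |0⟩) = H^k` for every `k`, and consequently
`(I ⊗ ⟨0|) e^{-β H'²/2} (I ⊗ |0⟩) = e^{-βH/2}` for every `β ≥ 0`. -/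
theorem effective_square_root {ι : Type*} [Fintype ι] [DecidableEq ι] (L : ℕ)
    (γ : Fin L → ℝ) (Pr : Fin L → Matrix ι ι ℂ)
    (hγ0 : ∀ l, 0 ≤ γ l) (hγ1 : ∑ l, γ l = 1)
    (hherm : ∀ l, (Pr l).IsHermitian) (hproj : ∀ l, Pr l * Pr l = Pr l) :
    ∀ (H : Matrix ι ι ℂ) (H' : Matrix (ι × Fin (L + 1)) (ι × Fin (L + 1)) ℂ),
      H = ∑ l, (γ l : ℂ) • Pr l →
      H' = ∑ l, ((Real.sqrt (γ l) : ℝ) : ℂ) •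
        (Pr l ⊗ₖ (Matrix.single l.succ 0 (1 : ℂ)
          + Matrix.single 0 l.succ (1 : ℂ))) →
      (∀ k : ℕ, ancillaCompress (H' ^ (2 * k)) = H ^ k) ∧
      (∀ β : ℝ, 0 ≤ β →
        ancillaCompress (NormedSpace.exp (-(((β / 2 : ℝ)) : ℂ) • (H' * H')))
          = NormedSpace.exp (-(((β / 2 : ℝ)) : ℂ) • H)) :=
  effective_square_root_general L γ Pr hγ0 hproj
end
end
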